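/- Identity for the trefoil mirror -3_1: the triple sum over a, b, c ≥ 0 of q^(a + b² + c² + ab + ac)/((q;q)_a (q;q)_b (q;q)_c (q;q)_{a+b} (q;q)_{a+c}) equals 1/(q;q)_∞³, as formal power series in q. -/

import Mathlib

open scoped BigOperators

/-- `(q;q)_n = ∏_{k=1}^n (1 - q^k)` -/
noncomputable def qp (q : ℂ) (n : ℕ) : ℂ := ∏ k ∈ Finset.range n, (1 - q ^ (k + 1))

/-- `(q;q)_∞ = ∏_{k≥1} (1 - q^k)` -/
noncomputable def qpInf (q : ℂ) : ℂ := ∏' k : ℕ, (1 - q ^ (k + 1))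

/-- `(a;q)_n = ∏_{k=1}^n (1 - a q^{k-1})` -/
noncomputable def qpa (a q : ℂ) (n : ℕ) : ℂ := ∏ k ∈ Finset.range n, (1 - a * q ^ k)

/-- `(a;q)_∞ = ∏_{k≥0} (1 - a q^k)` -/
noncomputable def qpaInf (a q : ℂ) : ℂ := ∏' k : ℕ, (1 - a * q ^ k)

/-!
The summand factors as `q^a/(q;q)_a · T(a,b) · T(a,c)` with
`T(a,b) = q^(b²+ab)/((q;q)_b (q;q)_(a+b))` (`durfeeTerm q a b`), so it suffices to show that
`∑_a q^a/(q;q)_a` and every Durfee-rectangle sum `G_a = ∑_b T(a,b)` equal `1/(q;q)_∞`.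

Both are proved the same way. As `a → ∞`, a sum of this shape tends to `1/(q;q)_∞` by
dominated convergence, since only its `b = 0` term `1/(q;q)_a` survives. A termwise telescoping
in the summation index then shows that `H_a = ∑_n q^((a+1)n)/((q;q)_a (q;q)_n)` does not depend
on `a` (and `H_0` is Euler's sum), and that `D_a = G_a - G_(a+1)` satisfies
`D_a = -q^(a+1) D_(a+1)`. So `‖D_a‖` is nondecreasing and tends to `0`, which forces `D_a = 0`.
-/

open Filter Topology

section Sequences

variable {E : Type*} [NormedAddCommGroup E]

theorem eq_zero_of_norm_le_succ_of_tendsto_zero {f : ℕ → E} (hf : ∀ n, ‖f n‖ ≤ ‖f (n + 1)‖)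
    (h : Tendsto f atTop (𝓝 0)) (n : ℕ) : f n = 0 :=
  norm_le_zero_iff.mp <| (monotone_nat_of_le_succ hf).ge_of_tendsto (by simpa using h.norm) n

theorem eq_of_succ_eq_of_tendsto {f : ℕ → E} {L : E} (hf : ∀ n, f (n + 1) = f n)
    (h : Tendsto f atTop (𝓝 L)) (n : ℕ) : f n = L :=
  sub_eq_zero.mp <| eq_zero_of_norm_le_succ_of_tendsto_zero (f := (f · - L))
    (fun n => by rw [hf]) (by simpa using h.sub_const L) n

theorem eq_of_norm_sub_succ_le_of_tendsto {f : ℕ → E} {L : E}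
    (hf : ∀ n, ‖f n - f (n + 1)‖ ≤ ‖f (n + 1) - f (n + 2)‖) (h : Tendsto f atTop (𝓝 L))
    (n : ℕ) : f n = L := by
  have h_diff : Tendsto (fun n => f n - f (n + 1)) atTop (𝓝 0) := by
    simpa using h.sub (h.comp (tendsto_add_atTop_nat 1))
  refine eq_of_succ_eq_of_tendsto (fun n => ?_) h n
  exact (sub_eq_zero.mp (eq_zero_of_norm_le_succ_of_tendsto_zero hf h_diff n)).symm

theorem hasSum_sub_succ {u : ℕ → E} (hu : Summable u) :
    HasSum (fun n => u n - u (n + 1)) (u 0) := by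
  convert hu.hasSum.sub ((summable_nat_add_iff 1).mpr hu).hasSum using 1
  rw [hu.tsum_eq_zero_add, add_sub_cancel_right]

theorem tendsto_tsum_of_tendsto_head [CompleteSpace E] {f : ℕ → ℕ → E} {L : E}
    {bound : ℕ → ℝ} (h_sum : Summable bound) (h_bound : ∀ a n, ‖f a n‖ ≤ bound n)
    (h_head : Tendsto (f · 0) atTop (𝓝 L)) (h_tail : ∀ n, Tendsto (f · (n + 1)) atTop (𝓝 0)) :
    Tendsto (fun a => ∑' n, f a n) atTop (𝓝 L) := by
  have := tendsto_tsum_of_dominated_convergence (𝓕 := atTop)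
    (g := fun n => if n = 0 then L else 0) h_sum
    (fun n => by cases n <;> simp [h_head, h_tail]) (.of_forall h_bound)
  simpa only [tsum_ite_eq] using this

end Sequences

section QPochhammer

variable {q : ℂ}

theorem qp_zero : qp q 0 = 1 := Finset.prod_range_zero _

theorem qp_succ (n : ℕ) : qp q (n + 1) = qp q n * (1 - q ^ (n + 1)) :=
  Finset.prod_range_succ _ _

theorem one_sub_pow_succ_ne_zero (hq : ‖q‖ < 1) (n : ℕ) : 1 - q ^ (n + 1) ≠ 0 := by
  refine sub_ne_zero.mpr fun h => ?_
  have := congrArg norm h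
  rw [norm_one, norm_pow] at this
  exact (pow_lt_one₀ (norm_nonneg q) hq n.succ_ne_zero).ne' this

theorem qp_ne_zero (hq : ‖q‖ < 1) (n : ℕ) : qp q n ≠ 0 :=
  Finset.prod_ne_zero_iff.mpr fun k _ => one_sub_pow_succ_ne_zero hq k

theorem tendsto_qp (hq : ‖q‖ < 1) : Tendsto (qp q) atTop (𝓝 (qpInf q)) :=
  (ModularForm.multipliable_one_sub_pow hq).hasProd.tendsto_prod_nat

theorem qpInf_ne_zero (hq : ‖q‖ < 1) : qpInf q ≠ 0 := by
  simpa [qpInf, ← sub_eq_add_neg] using tprod_one_add_ne_zero_of_summable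
    (f := fun n => -q ^ (n + 1)) (by simpa [← sub_eq_add_neg] using one_sub_pow_succ_ne_zero hq)
    (by simpa using (summable_nat_add_iff 1).mpr (summable_geometric_of_lt_one (norm_nonneg _) hq))

theorem tendsto_inv_qp (hq : ‖q‖ < 1) : Tendsto (fun n => (qp q n)⁻¹) atTop (𝓝 (qpInf q)⁻¹) :=
  (tendsto_qp hq).inv₀ (qpInf_ne_zero hq)

theorem exists_norm_inv_qp_le (hq : ‖q‖ < 1) : ∃ M, ∀ n, ‖(qp q n)⁻¹‖ ≤ M := by
  obtain ⟨M, hM⟩ := (tendsto_inv_qp hq).norm.bddAbove_range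
  exact ⟨M, fun n => hM ⟨n, rfl⟩⟩

theorem norm_pow_div_qp_mul_qp_le (hq : ‖q‖ < 1) {M : ℝ} (hM : ∀ n, ‖(qp q n)⁻¹‖ ≤ M)
    {k m : ℕ} (hkm : k ≤ m) (i j : ℕ) : ‖q ^ m / (qp q i * qp q j)‖ ≤ M ^ 2 * ‖q‖ ^ k := by
  rw [div_eq_mul_inv, mul_inv, norm_mul, norm_mul, norm_pow]
  have hM0 : 0 ≤ M := (norm_nonneg _).trans (hM 0)
  calc ‖q‖ ^ m * (‖(qp q i)⁻¹‖ * ‖(qp q j)⁻¹‖) ≤ ‖q‖ ^ k * (M * M) :=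
        mul_le_mul (pow_le_pow_of_le_one (norm_nonneg q) hq.le hkm)
          (mul_le_mul (hM i) (hM j) (norm_nonneg _) hM0) (by positivity) (by positivity)
    _ = M ^ 2 * ‖q‖ ^ k := by ring

theorem summable_pow_div_qp_mul_qp (hq : ‖q‖ < 1) {m i j : ℕ → ℕ} (hm : ∀ n, n ≤ m n) :
    Summable fun n => q ^ m n / (qp q (i n) * qp q (j n)) := by
  obtain ⟨M, hM⟩ := exists_norm_inv_qp_le hq
  exact .of_norm_bounded ((summable_geometric_of_lt_one (norm_nonneg q) hq).mul_left (M ^ 2))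
    fun n => norm_pow_div_qp_mul_qp_le hq hM (hm n) _ _

end QPochhammer

section QSeries

variable {q : ℂ}

theorem tendsto_tsum_pow_div_qp_mul_qp (hq : ‖q‖ < 1) {m i j : ℕ → ℕ → ℕ}
    (h_bound : ∀ a n, n ≤ m a n) (h_tail : ∀ a n, a ≤ m a (n + 1))
    (h_head : ∀ a, q ^ m a 0 / (qp q (i a 0) * qp q (j a 0)) = (qp q a)⁻¹) :
    Tendsto (fun a => ∑' n, q ^ m a n / (qp q (i a n) * qp q (j a n))) atTop
      (𝓝 (qpInf q)⁻¹) := by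
  obtain ⟨M, hM⟩ := exists_norm_inv_qp_le hq
  refine tendsto_tsum_of_tendsto_head
    ((summable_geometric_of_lt_one (norm_nonneg q) hq).mul_left (M ^ 2))
    (fun a n => norm_pow_div_qp_mul_qp_le hq hM (h_bound a n) _ _)
    (by simpa only [h_head] using tendsto_inv_qp hq) fun n => ?_
  refine squeeze_zero_norm (fun a => norm_pow_div_qp_mul_qp_le hq hM (h_tail a n) _ _) ?_
  simpa using (tendsto_pow_atTop_nhds_zero_of_lt_one (norm_nonneg q) hq).const_mul (M ^ 2)

theorem tsum_pow_mul_div_qp_mul_qp (hq : ‖q‖ < 1) (a : ℕ) :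
    ∑' n, q ^ ((a + 1) * n) / (qp q a * qp q n) = (qpInf q)⁻¹ := by
  have h_le : ∀ a n : ℕ, n ≤ (a + 1) * n := fun a n => Nat.le_mul_of_pos_left n a.succ_pos
  have hS : ∀ a, Summable fun n => q ^ ((a + 1) * n) / (qp q a * qp q n) :=
    fun a => summable_pow_div_qp_mul_qp hq (h_le a)
  refine eq_of_succ_eq_of_tendsto (f := fun a => ∑' n, q ^ ((a + 1) * n) / (qp q a * qp q n))
    (fun a => ?_) (tendsto_tsum_pow_div_qp_mul_qp hq h_le (fun a n => by nlinarith)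
      (fun a => by simp [qp_zero])) a
  set u : ℕ → ℂ := fun n =>
    (q ^ ((a + 1) * n) - q ^ ((a + 1 + 1) * n)) / (qp q (a + 1) * qp q n)
  have hu : Summable u := by
    simp only [u, sub_div]
    exact (summable_pow_div_qp_mul_qp hq (h_le a)).sub (hS (a + 1))
  have h_term : ∀ n, q ^ ((a + 1) * n) / (qp q a * qp q n)
      - q ^ ((a + 1 + 1) * n) / (qp q (a + 1) * qp q n) = u n - u (n + 1) := by
    intro n
    simp only [u, qp_succ]
    have := qp_ne_zero hq a
    have := qp_ne_zero hq n
    have := one_sub_pow_succ_ne_zero hq a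
    have := one_sub_pow_succ_ne_zero hq n
    field_simp
    ring
  have h_sum := (hS a).hasSum.sub (hS (a + 1)).hasSum
  simp only [h_term] at h_sum
  have := h_sum.unique (hasSum_sub_succ hu)
  simp only [u, mul_zero, pow_zero, sub_self, zero_div] at this
  exact (sub_eq_zero.mp this).symm

theorem tsum_pow_div_qp (hq : ‖q‖ < 1) : ∑' n, q ^ n / qp q n = (qpInf q)⁻¹ := by
  simpa [qp_zero] using tsum_pow_mul_div_qp_mul_qp hq 0

end QSeries

noncomputable def durfeeTerm (q : ℂ) (a b : ℕ) : ℂ :=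
  q ^ (b ^ 2 + a * b) / (qp q b * qp q (a + b))

section Durfee

variable {q : ℂ}

theorem summable_durfeeTerm (hq : ‖q‖ < 1) (a : ℕ) : Summable (durfeeTerm q a) :=
  summable_pow_div_qp_mul_qp hq fun b => by nlinarith

theorem tendsto_tsum_durfeeTerm (hq : ‖q‖ < 1) :
    Tendsto (fun a => ∑' b, durfeeTerm q a b) atTop (𝓝 (qpInf q)⁻¹) :=
  tendsto_tsum_pow_div_qp_mul_qp hq (fun a b => by nlinarith) (fun a b => by nlinarith)
    (fun a => by simp [qp_zero])

theorem tsum_durfeeTerm_sub_succ (hq : ‖q‖ < 1) (a : ℕ) :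
    ∑' b, durfeeTerm q a b - ∑' b, durfeeTerm q (a + 1) b =
      -(q ^ (a + 1) * (∑' b, durfeeTerm q (a + 1) b - ∑' b, durfeeTerm q (a + 2) b)) := by
  set u : ℕ → ℂ := fun b =>
    (q ^ (b ^ 2 + a * b) - q ^ (b ^ 2 + a * b + b)) / (qp q b * qp q (a + b + 1))
  have hu : Summable u := by
    simp only [u, sub_div]
    exact (summable_pow_div_qp_mul_qp hq fun b => by nlinarith).sub
      (summable_pow_div_qp_mul_qp hq fun b => by nlinarith)
  have h_term : ∀ b, durfeeTerm q a b - durfeeTerm q (a + 1) b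
      + q ^ (a + 1) * (durfeeTerm q (a + 1) b - durfeeTerm q (a + 2) b) = u b - u (b + 1) := by
    intro b
    simp only [u, durfeeTerm]
    rw [show a + 1 + b = a + b + 1 by ring, show a + 2 + b = a + b + 1 + 1 by ring,
      show a + (b + 1) + 1 = a + b + 1 + 1 by ring, qp_succ b, qp_succ (a + b + 1),
      qp_succ (a + b)]
    have := qp_ne_zero hq b
    have := qp_ne_zero hq (a + b)
    have := one_sub_pow_succ_ne_zero hq b
    have := one_sub_pow_succ_ne_zero hq (a + b)
    have := one_sub_pow_succ_ne_zero hq (a + b + 1)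
    field_simp
    ring
  have h_sum := ((summable_durfeeTerm hq a).hasSum.sub (summable_durfeeTerm hq (a + 1)).hasSum).add
    (((summable_durfeeTerm hq (a + 1)).hasSum.sub (summable_durfeeTerm hq (a + 2)).hasSum).mul_left
      (q ^ (a + 1)))
  simp only [h_term] at h_sum
  have := h_sum.unique (hasSum_sub_succ hu)
  simp only [u] at this
  linear_combination this

theorem tsum_durfeeTerm (hq : ‖q‖ < 1) (a : ℕ) : ∑' b, durfeeTerm q a b = (qpInf q)⁻¹ := by
  refine eq_of_norm_sub_succ_le_of_tendsto (fun a => ?_) (tendsto_tsum_durfeeTerm hq) a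
  rw [tsum_durfeeTerm_sub_succ hq a, norm_neg, norm_mul, norm_pow]
  exact mul_le_of_le_one_left (norm_nonneg _) (pow_le_one₀ (norm_nonneg q) hq.le)

end Durfee

/-- `Φ_{-3_1}(q)`: identity for the mirror trefoil. -/
theorem phi_neg_3_1 (q : ℂ) (hq : ‖q‖ < 1) :
    ∑' a : ℕ, ∑' b : ℕ, ∑' c : ℕ,
      q ^ (a + b ^ 2 + c ^ 2 + a * b + a * c) /
        (qp q a * qp q b * qp q c * qp q (a + b) * qp q (a + c)) =
    1 / qpInf q ^ 3 := by
  have h_factor : ∀ a b c : ℕ, q ^ (a + b ^ 2 + c ^ 2 + a * b + a * c) /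
      (qp q a * qp q b * qp q c * qp q (a + b) * qp q (a + c)) =
        q ^ a / qp q a * (durfeeTerm q a b * durfeeTerm q a c) := by
    intro a b c
    rw [durfeeTerm, durfeeTerm, div_mul_div_comm, div_mul_div_comm, ← pow_add, ← pow_add]
    congr 1 <;> ring
  simp_rw [h_factor, tsum_mul_left, tsum_mul_right, tsum_durfeeTerm hq, tsum_mul_right,
    tsum_pow_div_qp hq]
  ring
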